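/- Let S = (A,B) be an interval sequence, let C and D be levelled sequences lying in S, with D graphic. If vol(D,S) ≤ vol(C,S), then the interval sequence (A,C) is realizable; if vol(D,S) ≥ vol(C,S), then the interval sequence (C,B) is realizable. -/

import Mathlib

open Finset

/-- A sequence is graphic if it is the degree sequence of a simple graph. -/
def IsGraphic {n : ℕ} (D : Fin n → ℕ) : Prop :=
  ∃ (G : SimpleGraph (Fin n)) (_ : DecidableRel G.Adj), ∀ i, G.degree i = D i

/-- The levelling operation: decrement entry `α` by 1, increment entry `β` by 1. -/
def lvl {n : ℕ} (D : Fin n → ℕ) (α β : Fin n) : Fin n → ℕ :=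
  fun i => if i = α then D α - 1 else if i = β then D β + 1 else D i

/-- The spread `φ(D) = ∑_{r<s} |d_r - d_s|`. -/
def spread {n : ℕ} (D : Fin n → ℕ) : ℤ :=
  ∑ r : Fin n, ∑ s : Fin n, if r < s then |(D r : ℤ) - (D s : ℤ)| else 0

/-- `A ≤ D ≤ B` coordinatewise. -/
def Between {n : ℕ} (A D B : Fin n → ℕ) : Prop := ∀ i, A i ≤ D i ∧ D i ≤ B i

/-- Volume of `D` w.r.t. lower boundary `A`. -/
def vol {n : ℕ} (A D : Fin n → ℕ) : ℕ := ∑ i, (D i - A i)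

/-- An interval sequence `(A,B)` is realizable if it contains a graphic sequence. -/
def Realizable {n : ℕ} (A B : Fin n → ℕ) : Prop := ∃ D, IsGraphic D ∧ Between A D B

/-- Two sequences are similar if one is a permutation of the other. -/
def SimilarSeq {n : ℕ} (D D' : Fin n → ℕ) : Prop :=
  ∃ σ : Equiv.Perm (Fin n), ∀ i, D' i = D (σ i)

/-- `D` is levelled w.r.t. `(A,B)`: it lies in `[A,B]` and no levelling operation staying
within `[A,B]` strictly decreases its spread. -/
def IsLevelled {n : ℕ} (A B D : Fin n → ℕ) : Prop :=
  Between A D B ∧ ∀ α β : Fin n, α ≠ β → D β < D α → Between A (lvl D α β) B →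
    spread D ≤ spread (lvl D α β)

/-- One levelling step from `D` to `D'` staying within `[A,B]`. -/
def LvlStep {n : ℕ} (A B D D' : Fin n → ℕ) : Prop :=
  ∃ α β : Fin n, α ≠ β ∧ D β < D α ∧ D' = lvl D α β ∧ Between A D' B

/-- `F(ℓ,S) = ∑_i (min(ℓ,b_i) - min(ℓ,a_i))`. -/
noncomputable def Fvol {n : ℕ} (A B : Fin n → ℕ) (ℓ : ℝ) : ℝ :=
  ∑ i, (min ℓ (B i : ℝ) - min ℓ (A i : ℝ))

/-- Upper deviation `δ_U(D,S) = ∑_i max(0, d_i - b_i)` (truncated subtraction). -/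
def devU {n : ℕ} (D B : Fin n → ℕ) : ℕ := ∑ i, (D i - B i)

/-- Lower deviation `δ_L(D,S) = ∑_i max(0, a_i - d_i)` (truncated subtraction). -/
def devL {n : ℕ} (D A : Fin n → ℕ) : ℕ := ∑ i, (A i - D i)

/-- `R` lies in `[B,⊤]`, `(A,R)` is realizable, and `∑ (r_i - b_i)` is minimum. -/
def MinUpper {n : ℕ} (A B R : Fin n → ℕ) : Prop :=
  (∀ i, B i ≤ R i ∧ R i ≤ n - 1) ∧ Realizable A R ∧
  ∀ R' : Fin n → ℕ, (∀ i, B i ≤ R' i ∧ R' i ≤ n - 1) → Realizable A R' →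
    ∑ i, (R i - B i) ≤ ∑ i, (R' i - B i)

/-!
A levelled `C` has no gap of two between an entry that could go down and one that could go up:
if `a_α < c_α` and `c_β < b_β`, then `c_α ≤ c_β + 1`, since otherwise moving a unit from `α` to `β`
would strictly decrease the spread. Now take the graphic `D`. Wherever `D` exceeds `C` at `p` and
falls short of it at `q`, this gives `d_q < c_q ≤ c_p + 1 ≤ d_p`, so moving a unit of `D` from `p`
to `q` is a levelling operation; it keeps `D` graphic, inside `[A,B]`, with the same total, and
brings it closer to `C`. Repeating, `D` becomes comparable with `C`, and the volume inequality
decides on which side of `C` it lies.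
-/

namespace SimpleGraph

variable {V : Type*} [Fintype V] [DecidableEq V] (G : SimpleGraph V) [DecidableRel G.Adj]

lemma neighborFinset_sup_edge {s t : V} (hst : s ≠ t) (x : V) :
    (G ⊔ edge s t).neighborFinset x =
      G.neighborFinset x ∪ if x = s then {t} else if x = t then {s} else ∅ := by
  ext y
  by_cases hs : x = s <;> by_cases ht : x = t <;> simp [edge_adj, hs, ht, hst] <;> aesop

lemma degree_sup_edge {s t : V} (hst : s ≠ t) (hn : ¬G.Adj s t) (x : V) :
    (G ⊔ edge s t).degree x = G.degree x + if x = s ∨ x = t then 1 else 0 := by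
  rw [← card_neighborFinset_eq_degree, neighborFinset_sup_edge G hst, card_union_of_disjoint]
  · by_cases hs : x = s <;> by_cases ht : x = t <;> simp_all
  · by_cases hs : x = s <;> by_cases ht : x = t <;> simp_all [G.adj_comm]

lemma degree_sdiff_edge {s t : V} (h : G.Adj s t) (x : V) :
    (G \ edge s t).degree x + (if x = s ∨ x = t then 1 else 0) = G.degree x := by
  rw [← degree_sup_edge _ (G.ne_of_adj h) (by simp [edge_adj, G.ne_of_adj h])]
  convert rfl using 2
  simp [sup_edge_of_adj G h]

lemma exists_adj_not_adj_of_degree_lt {a b : V} (h : G.degree b < G.degree a) :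
    ∃ v, G.Adj a v ∧ ¬G.Adj b v ∧ v ≠ b := by
  by_contra! hcon
  have hsub : (G.neighborFinset a).erase b ⊆ (G.neighborFinset b).erase a := by
    intro v hv
    rw [mem_erase, mem_neighborFinset] at hv ⊢
    exact ⟨(G.ne_of_adj hv.2).symm, by_contra fun hbv => hv.1 (hcon v hv.2 hbv)⟩
  have hcard := card_le_card hsub
  rw [card_erase_eq_ite, card_erase_eq_ite] at hcard
  simp only [mem_neighborFinset, card_neighborFinset_eq_degree, G.adj_comm b a] at hcard
  split_ifs at hcard with hadj
  · have := hadj.degree_pos_right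
    omega
  · omega

/-- Replace an edge `av` by `bv`, where `v` is a neighbour of `a` but not of `b`. -/
lemma exists_degree_transfer {a b : V} (h : G.degree b < G.degree a) :
    ∃ (G' : SimpleGraph V) (_ : DecidableRel G'.Adj), G'.degree a + 1 = G.degree a ∧
      G'.degree b = G.degree b + 1 ∧ ∀ x, x ≠ a → x ≠ b → G'.degree x = G.degree x := by
  obtain ⟨v, hav, hbv, hvb⟩ := G.exists_adj_not_adj_of_degree_lt h
  have hab : a ≠ b := by rintro rfl; exact h.false
  have hva : v ≠ a := (G.ne_of_adj hav).symm
  have hsup := (G \ edge a v).degree_sup_edge hvb.symm (by simp [hbv])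
  have hsdiff := G.degree_sdiff_edge hav
  refine ⟨G \ edge a v ⊔ edge b v, inferInstance, ?_, ?_, fun x hxa hxb => ?_⟩
  · rw [hsup, ← hsdiff a]
    simp [hab, hva.symm]
  · rw [hsup, ← hsdiff b]
    simp [hab.symm, hvb.symm]
  · rw [hsup, ← hsdiff x]
    by_cases hxv : x = v <;> simp [hxa, hxb, hxv]

end SimpleGraph

lemma le_of_forall_le_of_sum_le {ι M : Type*} [Fintype ι] [AddCommMonoid M] [PartialOrder M]
    [IsOrderedCancelAddMonoid M] {f g : ι → M} (h : ∀ i, f i ≤ g i)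
    (hs : ∑ i, g i ≤ ∑ i, f i) (i : ι) : g i ≤ f i :=
  ((sum_eq_sum_iff_of_le fun i _ => h i).1 ((sum_le_sum fun i _ => h i).antisymm hs) i
    (mem_univ i)).ge

lemma Fintype.sum_eq_add_add_sum_sdiff_pair {ι M : Type*} [Fintype ι] [DecidableEq ι]
    [AddCommMonoid M] (f : ι → M) {α β : ι} (hab : α ≠ β) :
    ∑ i, f i = f α + f β + ∑ i ∈ univ \ {α, β}, f i := by
  rw [← sum_sdiff (subset_univ {α, β}), sum_pair hab, add_comm]

lemma sum_sum_abs_sub_eq {ι : Type*} [Fintype ι] [DecidableEq ι] (z : ι → ℤ) {α β : ι}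
    (hab : α ≠ β) :
    ∑ r, ∑ s, |z r - z s| =
      2 * |z α - z β| + 2 * ∑ s ∈ univ \ {α, β}, (|z α - z s| + |z β - z s|) +
        ∑ r ∈ univ \ {α, β}, ∑ s ∈ univ \ {α, β}, |z r - z s| := by
  have hswap (c : ι) : ∑ r ∈ univ \ {α, β}, |z r - z c| = ∑ s ∈ univ \ {α, β}, |z c - z s| :=
    sum_congr rfl fun _ _ => abs_sub_comm _ _
  simp only [Fintype.sum_eq_add_add_sum_sdiff_pair _ hab, sum_add_distrib, sub_self, abs_zero,
    hswap, abs_sub_comm (z β) (z α)]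
  ring

section Levelling

variable {n : ℕ}

lemma lvl_apply_fst (D : Fin n → ℕ) (α β : Fin n) : lvl D α β α = D α - 1 := by
  simp [lvl]

lemma lvl_apply_snd (D : Fin n → ℕ) {α β : Fin n} (hab : α ≠ β) : lvl D α β β = D β + 1 := by
  simp [lvl, hab.symm]

lemma lvl_apply_of_ne (D : Fin n → ℕ) {α β i : Fin n} (hα : i ≠ α) (hβ : i ≠ β) :
    lvl D α β i = D i := by
  simp [lvl, hα, hβ]

lemma IsGraphic.lvl {D : Fin n → ℕ} {α β : Fin n} (hD : IsGraphic D) (hab : α ≠ β)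
    (hlt : D β < D α) : IsGraphic (lvl D α β) := by
  obtain ⟨G, _, hdeg⟩ := hD
  obtain ⟨G', _, hα, hβ, hrest⟩ := G.exists_degree_transfer (a := α) (b := β) (by simpa [hdeg])
  refine ⟨G', ‹_›, fun i => ?_⟩
  by_cases hiα : i = α
  · subst hiα
    rw [lvl_apply_fst, ← hdeg]
    omega
  by_cases hiβ : i = β
  · subst hiβ
    rw [lvl_apply_snd _ hab, hβ, hdeg]
  rw [lvl_apply_of_ne _ hiα hiβ, hrest i hiα hiβ, hdeg]

lemma Between.lvl {A B D : Fin n → ℕ} (h : Between A D B) {α β : Fin n} (hab : α ≠ β)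
    (hα : A α < D α) (hβ : D β < B β) : Between A (lvl D α β) B := by
  intro i
  by_cases hiα : i = α
  · subst hiα
    rw [lvl_apply_fst]
    exact ⟨by omega, (Nat.sub_le _ _).trans (h i).2⟩
  by_cases hiβ : i = β
  · subst hiβ
    rw [lvl_apply_snd _ hab]
    exact ⟨(h i).1.trans (Nat.le_succ _), hβ⟩
  rw [lvl_apply_of_ne _ hiα hiβ]
  exact h i

lemma sum_lvl (D : Fin n → ℕ) {α β : Fin n} (hab : α ≠ β) (hα : 0 < D α) :
    ∑ i, lvl D α β i = ∑ i, D i := by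
  rw [Fintype.sum_eq_add_add_sum_sdiff_pair _ hab, Fintype.sum_eq_add_add_sum_sdiff_pair D hab,
    lvl_apply_fst, lvl_apply_snd _ hab]
  have hrest : ∑ i ∈ univ \ {α, β}, lvl D α β i = ∑ i ∈ univ \ {α, β}, D i :=
    sum_congr rfl fun i hi => by
      simp only [mem_sdiff, mem_insert, mem_singleton, not_or] at hi
      exact lvl_apply_of_ne D hi.2.1 hi.2.2
  omega

lemma two_mul_spread (x : Fin n → ℕ) :
    2 * spread x = ∑ r, ∑ s, |(x r : ℤ) - x s| := by
  have hswap : spread x = ∑ r, ∑ s, if s < r then |(x r : ℤ) - x s| else 0 := by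
    rw [spread, sum_comm]
    refine sum_congr rfl fun r _ => sum_congr rfl fun s _ => ?_
    simp [abs_sub_comm]
  rw [two_mul]
  nth_rewrite 2 [hswap]
  rw [spread, ← sum_add_distrib]
  refine sum_congr rfl fun r _ => ?_
  rw [← sum_add_distrib]
  refine sum_congr rfl fun s _ => ?_
  rcases lt_trichotomy r s with h | rfl | h
  · simp [h, h.not_gt]
  · simp
  · simp [h, h.not_gt]

lemma spread_lvl_lt (x : Fin n → ℕ) {α β : Fin n} (h : x β + 2 ≤ x α) :
    spread (lvl x α β) < spread x := by
  have hab : α ≠ β := by rintro rfl; omega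
  set u : Finset (Fin n) := univ \ {α, β}
  have hu : ∀ s ∈ u, lvl x α β s = x s := fun s hs => by
    simp only [u, mem_sdiff, mem_insert, mem_singleton, not_or] at hs
    exact lvl_apply_of_ne x hs.2.1 hs.2.2
  have hpair : |((x α - 1 : ℕ) : ℤ) - ((x β + 1 : ℕ) : ℤ)| + 2 = |(x α : ℤ) - x β| := by
    rw [abs_of_nonneg (by omega), abs_of_nonneg (by omega)]
    omega
  -- moving both ends of `[x β, x α]` inwards brings them closer to every point in total
  have hmid : ∀ s ∈ u, |((x α - 1 : ℕ) : ℤ) - x s| + |((x β + 1 : ℕ) : ℤ) - x s| ≤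
      |(x α : ℤ) - x s| + |(x β : ℤ) - x s| := fun s _ => by
    simp only [abs_eq_max_neg]
    omega
  have hlt : 2 * spread (lvl x α β) < 2 * spread x := by
    rw [two_mul_spread, two_mul_spread, sum_sum_abs_sub_eq _ hab, sum_sum_abs_sub_eq _ hab,
      lvl_apply_fst, lvl_apply_snd _ hab]
    have hcore : ∑ r ∈ u, ∑ s ∈ u, |(lvl x α β r : ℤ) - lvl x α β s| =
        ∑ r ∈ u, ∑ s ∈ u, |(x r : ℤ) - x s| :=
      sum_congr rfl fun r hr => sum_congr rfl fun s hs => by rw [hu r hr, hu s hs]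
    have hside : ∑ s ∈ u, (|((x α - 1 : ℕ) : ℤ) - lvl x α β s| +
        |((x β + 1 : ℕ) : ℤ) - lvl x α β s|) ≤ ∑ s ∈ u, (|(x α : ℤ) - x s| + |(x β : ℤ) - x s|) :=
      sum_le_sum fun s hs => by rw [hu s hs]; exact hmid s hs
    linarith
  omega

variable {A B C D : Fin n → ℕ}

lemma IsLevelled.le_add_one (hC : IsLevelled A B C) {α β : Fin n} (hα : A α < C α)
    (hβ : C β < B β) : C α ≤ C β + 1 := by
  by_contra! hgap
  have hab : α ≠ β := by rintro rfl; omega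
  have := hC.2 α β hab (by omega) (hC.1.lvl hab hα hβ)
  have := spread_lvl_lt C (α := α) (β := β) (by omega)
  omega

lemma IsLevelled.exists_graphic_comparable (hC : IsLevelled A B C) (hD : IsGraphic D)
    (hDAB : Between A D B) :
    ∃ D', IsGraphic D' ∧ Between A D' B ∧ ∑ i, D' i = ∑ i, D i ∧
      ((∀ i, D' i ≤ C i) ∨ ∀ i, C i ≤ D' i) := by
  induction hm : ∑ i, (D i - C i) using Nat.strong_induction_on generalizing D with
  | _ m ih =>
    by_cases hcmp : (∀ i, D i ≤ C i) ∨ ∀ i, C i ≤ D i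
    · exact ⟨D, hD, hDAB, rfl, hcmp⟩
    push Not at hcmp
    obtain ⟨⟨p, hp⟩, ⟨q, hq⟩⟩ := hcmp
    have hpq : p ≠ q := by rintro rfl; omega
    have hgap := hC.le_add_one (α := q) (β := p) (by linarith [(hDAB q).1])
      (by linarith [(hDAB p).2])
    have hdec : ∑ i, (lvl D p q i - C i) < m := hm ▸ by
      refine sum_lt_sum (fun i _ => ?_) ⟨p, mem_univ p, by rw [lvl_apply_fst]; omega⟩
      by_cases hip : i = p
      · subst hip; rw [lvl_apply_fst]; omega
      by_cases hiq : i = q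
      · subst hiq; rw [lvl_apply_snd _ hpq]; omega
      rw [lvl_apply_of_ne _ hip hiq]
    obtain ⟨D', hD', hD'AB, hsum, hD'C⟩ := ih _ hdec (hD.lvl hpq (by omega))
      (hDAB.lvl hpq (by linarith [(hC.1 p).1]) (by linarith [(hC.1 q).2])) rfl
    exact ⟨D', hD', hD'AB, hsum.trans (sum_lvl D hpq (by omega)), hD'C⟩

lemma IsLevelled.realizable_of_sum_le (hC : IsLevelled A B C) (hD : IsGraphic D)
    (hDAB : Between A D B) (hs : ∑ i, D i ≤ ∑ i, C i) : Realizable A C := by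
  obtain ⟨D', hD', hD'AB, hsum, hD'C | hCD'⟩ := hC.exists_graphic_comparable hD hDAB
  · exact ⟨D', hD', fun i => ⟨(hD'AB i).1, hD'C i⟩⟩
  · exact ⟨D', hD', fun i => ⟨(hD'AB i).1, le_of_forall_le_of_sum_le hCD' (hsum ▸ hs) i⟩⟩

lemma IsLevelled.realizable_of_sum_ge (hC : IsLevelled A B C) (hD : IsGraphic D)
    (hDAB : Between A D B) (hs : ∑ i, C i ≤ ∑ i, D i) : Realizable C B := by
  obtain ⟨D', hD', hD'AB, hsum, hD'C | hCD'⟩ := hC.exists_graphic_comparable hD hDAB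
  · exact ⟨D', hD', fun i => ⟨le_of_forall_le_of_sum_le hD'C (hsum ▸ hs) i, (hD'AB i).2⟩⟩
  · exact ⟨D', hD', fun i => ⟨hCD' i, (hD'AB i).2⟩⟩

lemma vol_add_sum {X : Fin n → ℕ} (h : ∀ i, A i ≤ X i) : vol A X + ∑ i, A i = ∑ i, X i := by
  rw [vol, ← sum_add_distrib]
  exact sum_congr rfl fun i _ => Nat.sub_add_cancel (h i)

end Levelling

theorem stmt_10_general {n : ℕ} (A B C D : Fin n → ℕ)
    (hC : IsLevelled A B C) (hD : IsLevelled A B D) (hDg : IsGraphic D) :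
    (vol A D ≤ vol A C → Realizable A C) ∧
    (vol A C ≤ vol A D → Realizable C B) := by
  have hvolC := vol_add_sum fun i => (hC.1 i).1
  have hvolD := vol_add_sum fun i => (hD.1 i).1
  exact ⟨fun hle => hC.realizable_of_sum_le hDg hD.1 (by omega),
    fun hle => hC.realizable_of_sum_ge hDg hD.1 (by omega)⟩

theorem stmt_10 {n : ℕ} (A B C D : Fin n → ℕ)
    (hS : ∀ i, A i ≤ B i ∧ B i ≤ n - 1)
    (hC : IsLevelled A B C) (hD : IsLevelled A B D) (hDg : IsGraphic D) :
    (vol A D ≤ vol A C → Realizable A C) ∧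
    (vol A C ≤ vol A D → Realizable C B) :=
  stmt_10_general A B C D hC hD hDg
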